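/- Let g ≥ 1 and 1 ≤ k ≤ g. The real symplectic group Sp(2g,ℝ) acts transitively on the Hodge–Riemann k-planes: for any two complex k-dimensional Hodge–Riemann subspaces τ, τ' ⊆ ℂ^{2g} there exists a matrix S ∈ Sp(2g,ℝ) whose ℂ-linear extension to ℂ^{2g} maps τ onto τ'. -/

import Mathlib

/-!
On a Hodge–Riemann plane `τ`, `⟪x, y⟫ = i·ω(y, x̄)/2` is a Hermitian inner product. Writing the
vectors of an orthonormal basis as `x_a = u_a + i·v_a` with `u_a, v_a` real, isotropy of `τ` and
orthonormality say exactly that `ω(u_a, u_b) = ω(v_a, v_b) = 0` and `ω(u_a, v_b) = δ_ab`. Such a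
family extends to a symplectic basis of `ℝ^{2g}` (the usual Witt argument: project onto the
symplectic complement and use nondegeneracy), and the matrix with these columns is a real
symplectic matrix taking `e_{2a} + i·e_{2a+1}` to `x_a`, hence the standard plane onto `τ`.
Composing one such matrix with the inverse of another gives the theorem.
-/

open scoped BigOperators

/-- The standard symplectic form
`ω(x,y) = Σ_{i=0}^{g-1} (x_{2i}·y_{2i+1} − x_{2i+1}·y_{2i})` on `R^{2g}`. -/
def stdSymp {R : Type*} [CommRing R] (g : ℕ) (x y : Fin (2 * g) → R) : R :=
  ∑ i : Fin g,
    (x ⟨2 * i.val, by have := i.isLt; omega⟩ * y ⟨2 * i.val + 1, by have := i.isLt; omega⟩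
      - x ⟨2 * i.val + 1, by have := i.isLt; omega⟩ * y ⟨2 * i.val, by have := i.isLt; omega⟩)

/-- A complex subspace `τ ⊆ ℂ^{2g}` is *Hodge–Riemann* if it is isotropic for
the standard symplectic form and `i·ω(x, x̄)` is a positive real number for
every nonzero `x ∈ τ`. -/
def IsHodgeRiemann (g : ℕ) (τ : Submodule ℂ (Fin (2 * g) → ℂ)) : Prop :=
  (∀ x ∈ τ, ∀ y ∈ τ, stdSymp g x y = 0) ∧
  (∀ x ∈ τ, x ≠ 0 →
    ∃ r : ℝ, 0 < r ∧
      Complex.I * stdSymp g x (fun i => (starRingEnd ℂ) (x i)) = (r : ℂ))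

namespace LinearMap.BilinForm

section CommRing

variable {R M ι : Type*} [CommRing R] [AddCommGroup M] [Module R M] {B : LinearMap.BilinForm R M}

structure IsSymplecticFamily [DecidableEq ι] (B : LinearMap.BilinForm R M) (u v : ι → M) :
    Prop where
  apply_u_u : ∀ a b, B (u a) (u b) = 0
  apply_v_v : ∀ a b, B (v a) (v b) = 0
  apply_u_v : ∀ a b, B (u a) (v b) = if a = b then 1 else 0

/-- The projection onto the `B`-orthogonal complement of the span of a symplectic family. -/
def symplecticProj [Fintype ι] (B : LinearMap.BilinForm R M) (u v : ι → M) (y : M) : M :=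
  y - ∑ a, B (u a) y • v a + ∑ a, B (v a) y • u a

theorem apply_symplecticProj_of_orthogonal [Fintype ι] {u v : ι → M} {w : M}
    (hu : ∀ a, B w (u a) = 0) (hv : ∀ a, B w (v a) = 0) (y : M) :
    B w (B.symplecticProj u v y) = B w y := by
  simp [symplecticProj, map_sum, hu, hv]

namespace IsSymplecticFamily

variable [DecidableEq ι] {u v : ι → M}

theorem apply_v_u (hB : B.IsAlt) (h : B.IsSymplecticFamily u v) (a b : ι) :
    B (v a) (u b) = -if a = b then 1 else 0 := by
  rw [← hB.neg_eq, h.apply_u_v]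
  simp only [eq_comm]

theorem apply_sumElim_eq {M' : Type*} [AddCommGroup M'] [Module R M']
    {B' : LinearMap.BilinForm R M'} (hB : B.IsAlt) (hB' : B'.IsAlt) {u' v' : ι → M'}
    (h : B.IsSymplecticFamily u v) (h' : B'.IsSymplecticFamily u' v') (s t : ι ⊕ ι) :
    B (Sum.elim u v s) (Sum.elim u v t) = B' (Sum.elim u' v' s) (Sum.elim u' v' t) := by
  rcases s with a | a <;> rcases t with b | b <;>
    simp [h.apply_u_u, h.apply_v_v, h.apply_u_v, h.apply_v_u hB, h'.apply_u_u, h'.apply_v_v,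
      h'.apply_u_v, h'.apply_v_u hB']

theorem apply_u_symplecticProj [Fintype ι] (h : B.IsSymplecticFamily u v) (b : ι) (y : M) :
    B (u b) (B.symplecticProj u v y) = 0 := by
  simp [symplecticProj, map_sum, h.apply_u_u, h.apply_u_v]

theorem apply_v_symplecticProj [Fintype ι] (hB : B.IsAlt) (h : B.IsSymplecticFamily u v)
    (b : ι) (y : M) : B (v b) (B.symplecticProj u v y) = 0 := by
  simp [symplecticProj, map_sum, h.apply_v_v, h.apply_v_u hB]

end IsSymplecticFamily

theorem IsSymplecticFamily.snoc {k : ℕ} (hB : B.IsAlt) {u v : Fin k → M}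
    (h : B.IsSymplecticFamily u v) {w z : M} (hwz : B w z = 1)
    (horth : ∀ a, B (u a) w = 0 ∧ B (v a) w = 0 ∧ B (u a) z = 0 ∧ B (v a) z = 0) :
    B.IsSymplecticFamily (Fin.snoc u w) (Fin.snoc v z) := by
  have hwu a : B w (u a) = 0 := hB.eq_iff.1 (horth a).1
  have hwv a : B w (v a) = 0 := hB.eq_iff.1 (horth a).2.1
  have hzv a : B z (v a) = 0 := hB.eq_iff.1 (horth a).2.2.2
  constructor <;> intro a b <;> cases a using Fin.lastCases <;> cases b using Fin.lastCases <;>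
    simp [hB.self_eq_zero, hwz, horth, hwu, hwv, hzv, h.apply_u_u, h.apply_v_v, h.apply_u_v,
      Fin.castSucc_ne_last, (Fin.castSucc_ne_last _).symm]

end CommRing

section Field

variable {K V ι : Type*} [Field K] [AddCommGroup V] [Module K V] {B : LinearMap.BilinForm K V}

namespace IsSymplecticFamily

variable [DecidableEq ι] [Fintype ι] {u v : ι → V}

theorem exists_orthogonal_pair [FiniteDimensional K V] (hB : B.IsAlt) (hB' : B.SeparatingLeft)
    (h : B.IsSymplecticFamily u v) (hdim : 2 * Fintype.card ι < Module.finrank K V) :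
    ∃ w z, B w z = 1 ∧ ∀ a, B (u a) w = 0 ∧ B (v a) w = 0 ∧ B (u a) z = 0 ∧ B (v a) z = 0 := by
  obtain ⟨y, hy⟩ : ∃ y, B.symplecticProj u v y ≠ 0 := by
    -- otherwise every vector lies in the span of the `2 * card ι` vectors `u a, v a`
    by_contra! hy
    have hspan : Submodule.span K (Set.range (Sum.elim u v)) = ⊤ := by
      refine Submodule.eq_top_iff'.2 fun y => ?_
      rw [show y = ∑ a, B (u a) y • v a - ∑ a, B (v a) y • u a by
        rw [← sub_eq_zero, ← hy y, symplecticProj]; abel]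
      exact sub_mem (Submodule.sum_mem _ fun a _ => Submodule.smul_mem _ _
          (Submodule.subset_span ⟨.inr a, rfl⟩))
        (Submodule.sum_mem _ fun a _ => Submodule.smul_mem _ _
          (Submodule.subset_span ⟨.inl a, rfl⟩))
    have := finrank_range_le_card (R := K) (Sum.elim u v)
    rw [Set.finrank, hspan, finrank_top, Fintype.card_sum] at this
    omega
  set w := B.symplecticProj u v y
  have hwu a : B w (u a) = 0 := hB.eq_iff.1 (h.apply_u_symplecticProj a y)
  have hwv a : B w (v a) = 0 := hB.eq_iff.1 (h.apply_v_symplecticProj hB a y)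
  obtain ⟨z, hz⟩ : ∃ z, B w z ≠ 0 := by
    by_contra! hz
    exact hy (hB' w hz)
  refine ⟨w, (B w z)⁻¹ • B.symplecticProj u v z, ?_, fun a =>
    ⟨h.apply_u_symplecticProj a y, h.apply_v_symplecticProj hB a y, ?_, ?_⟩⟩
  · rw [map_smul, smul_eq_mul, apply_symplecticProj_of_orthogonal hwu hwv, inv_mul_cancel₀ hz]
  · rw [map_smul, h.apply_u_symplecticProj, smul_zero]
  · rw [map_smul, h.apply_v_symplecticProj hB, smul_zero]

end IsSymplecticFamily

theorem IsSymplecticFamily.exists_extend [FiniteDimensional K V] (hB : B.IsAlt)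
    (hB' : B.SeparatingLeft) {k n : ℕ} (hkn : k ≤ n) (hn : 2 * n ≤ Module.finrank K V)
    {u v : Fin k → V} (h : B.IsSymplecticFamily u v) :
    ∃ U W : Fin n → V, B.IsSymplecticFamily U W ∧
      U ∘ Fin.castLE hkn = u ∧ W ∘ Fin.castLE hkn = v := by
  induction n, hkn using Nat.le_induction with
  | base => exact ⟨u, v, h, rfl, rfl⟩
  | succ n hkn ih =>
    obtain ⟨U, W, hUW, rfl, rfl⟩ := ih (by omega)
    obtain ⟨w, z, hwz, horth⟩ := hUW.exists_orthogonal_pair hB hB'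
      (by rw [Fintype.card_fin]; omega)
    exact ⟨_, _, hUW.snoc hB hwz horth,
      funext fun a => Fin.snoc_castSucc (α := fun _ => V) w U (Fin.castLE hkn a),
      funext fun a => Fin.snoc_castSucc (α := fun _ => V) z W (Fin.castLE hkn a)⟩

end Field

end LinearMap.BilinForm

section StdSymp

variable {R : Type*} [CommRing R] {g : ℕ}

def evenIdx (i : Fin g) : Fin (2 * g) := ⟨2 * i, by omega⟩

def oddIdx (i : Fin g) : Fin (2 * g) := ⟨2 * i + 1, by omega⟩

def evenOddEquiv (g : ℕ) : Fin g ⊕ Fin g ≃ Fin (2 * g) where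
  toFun := Sum.elim evenIdx oddIdx
  invFun j := if j.val % 2 = 0 then .inl ⟨j / 2, by omega⟩ else .inr ⟨j / 2, by omega⟩
  left_inv := by rintro (i | i) <;> simp [evenIdx, oddIdx, Fin.ext_iff]; omega
  right_inv j := by
    by_cases hj : j.val % 2 = 0 <;> simp [hj, evenIdx, oddIdx, Fin.ext_iff] <;> omega

theorem evenIdx_injective : Function.Injective (evenIdx : Fin g → Fin (2 * g)) :=
  fun _ _ h => Sum.inl_injective ((evenOddEquiv g).injective h)

theorem oddIdx_injective : Function.Injective (oddIdx : Fin g → Fin (2 * g)) :=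
  fun _ _ h => Sum.inr_injective ((evenOddEquiv g).injective h)

theorem evenIdx_ne_oddIdx (a b : Fin g) : evenIdx a ≠ oddIdx b :=
  fun h => Sum.inl_ne_inr ((evenOddEquiv g).injective h)

@[simp]
theorem evenOddEquiv_inl (a : Fin g) : evenOddEquiv g (.inl a) = evenIdx a := rfl

@[simp]
theorem evenOddEquiv_inr (a : Fin g) : evenOddEquiv g (.inr a) = oddIdx a := rfl

theorem stdSymp_eq (x y : Fin (2 * g) → R) :
    stdSymp g x y = ∑ i, (x (evenIdx i) * y (oddIdx i) - x (oddIdx i) * y (evenIdx i)) := rfl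

def stdSympForm (R : Type*) [CommRing R] (g : ℕ) : LinearMap.BilinForm R (Fin (2 * g) → R) :=
  LinearMap.mk₂ R (stdSymp g)
    (fun _ _ _ => by
      simp only [stdSymp_eq, Pi.add_apply, ← Finset.sum_add_distrib]
      exact Finset.sum_congr rfl fun _ _ => by ring)
    (fun _ _ _ => by
      simp only [stdSymp_eq, Pi.smul_apply, smul_eq_mul, Finset.mul_sum]
      exact Finset.sum_congr rfl fun _ _ => by ring)
    (fun _ _ _ => by
      simp only [stdSymp_eq, Pi.add_apply, ← Finset.sum_add_distrib]
      exact Finset.sum_congr rfl fun _ _ => by ring)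
    (fun _ _ _ => by
      simp only [stdSymp_eq, Pi.smul_apply, smul_eq_mul, Finset.mul_sum]
      exact Finset.sum_congr rfl fun _ _ => by ring)

@[simp]
theorem stdSympForm_apply (x y : Fin (2 * g) → R) : stdSympForm R g x y = stdSymp g x y := rfl

theorem stdSympForm_isAlt : (stdSympForm R g).IsAlt := fun x => by
  simp [stdSymp_eq, mul_comm]

theorem stdSymp_single_evenIdx_left (a : Fin g) (y : Fin (2 * g) → R) :
    stdSymp g (Pi.single (evenIdx a) 1) y = y (oddIdx a) := by
  simp [stdSymp_eq, Pi.single_apply, evenIdx_injective.eq_iff, (evenIdx_ne_oddIdx _ _).symm]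

theorem stdSymp_single_oddIdx_left (a : Fin g) (y : Fin (2 * g) → R) :
    stdSymp g (Pi.single (oddIdx a) 1) y = -y (evenIdx a) := by
  simp [stdSymp_eq, Pi.single_apply, oddIdx_injective.eq_iff, evenIdx_ne_oddIdx]

theorem stdSymp_single_evenIdx_right (x : Fin (2 * g) → R) (a : Fin g) :
    stdSymp g x (Pi.single (evenIdx a) 1) = -x (oddIdx a) := by
  rw [← stdSympForm_apply, ← stdSympForm_isAlt.neg_eq, stdSympForm_apply,
    stdSymp_single_evenIdx_left]

theorem stdSymp_single_oddIdx_right (x : Fin (2 * g) → R) (a : Fin g) :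
    stdSymp g x (Pi.single (oddIdx a) 1) = x (evenIdx a) := by
  rw [← stdSympForm_apply, ← stdSympForm_isAlt.neg_eq, stdSympForm_apply,
    stdSymp_single_oddIdx_left, neg_neg]

theorem stdSympForm_separatingLeft : (stdSympForm R g).SeparatingLeft := fun x hx => by
  funext j
  obtain ⟨a | a, rfl⟩ := (evenOddEquiv g).surjective j
  · simpa [stdSymp_single_oddIdx_right] using hx (Pi.single (oddIdx a) 1)
  · simpa [stdSymp_single_evenIdx_right] using hx (Pi.single (evenIdx a) 1)

theorem star_stdSymp {R : Type*} [CommRing R] [StarRing R] (x y : Fin (2 * g) → R) :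
    star (stdSymp g x y) = stdSymp g (star x) (star y) := by
  simp [stdSymp_eq, star_sum, mul_comm]

noncomputable def stdSympBasis (R : Type*) [CommRing R] (g : ℕ) :
    Module.Basis (Fin g ⊕ Fin g) R (Fin (2 * g) → R) :=
  (Pi.basisFun R (Fin (2 * g))).reindex (evenOddEquiv g).symm

theorem stdSympBasis_inl (a : Fin g) : stdSympBasis R g (.inl a) = Pi.single (evenIdx a) 1 := by
  simp [stdSympBasis]

theorem stdSympBasis_inr (a : Fin g) : stdSympBasis R g (.inr a) = Pi.single (oddIdx a) 1 := by
  simp [stdSympBasis]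

theorem isSymplecticFamily_stdSympBasis :
    (stdSympForm R g).IsSymplecticFamily (stdSympBasis R g ∘ .inl) (stdSympBasis R g ∘ .inr) where
  apply_u_u a b := by simp [stdSympBasis_inl, stdSymp_single_evenIdx_left, evenIdx_ne_oddIdx]
  apply_v_v a b := by simp [stdSympBasis_inr, stdSymp_single_oddIdx_left, evenIdx_ne_oddIdx]
  apply_u_v a b := by
    simp [stdSympBasis_inl, stdSympBasis_inr, stdSymp_single_evenIdx_left, Pi.single_apply,
      oddIdx_injective.eq_iff]

open Matrix

noncomputable def sympMatrix (U V : Fin g → Fin (2 * g) → R) :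
    Matrix (Fin (2 * g)) (Fin (2 * g)) R :=
  LinearMap.toMatrix' ((stdSympBasis R g).constr R (Sum.elim U V))

def IsStdSymplectic (S : Matrix (Fin (2 * g)) (Fin (2 * g)) R) : Prop :=
  ∀ x y, stdSymp g (S *ᵥ x) (S *ᵥ y) = stdSymp g x y

theorem stdSympBasis_eq_sumElim (s : Fin g ⊕ Fin g) :
    stdSympBasis R g s = Sum.elim (stdSympBasis R g ∘ .inl) (stdSympBasis R g ∘ .inr) s := by
  cases s <;> rfl

theorem isStdSymplectic_sympMatrix {U V : Fin g → Fin (2 * g) → R}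
    (h : (stdSympForm R g).IsSymplecticFamily U V) : IsStdSymplectic (sympMatrix U V) := by
  set L := (stdSympBasis R g).constr R (Sum.elim U V)
  have hL : (stdSympForm R g).compl₁₂ L L = stdSympForm R g :=
    LinearMap.ext_basis (stdSympBasis R g) (stdSympBasis R g) fun s t => by
      rw [LinearMap.compl₁₂_apply, Module.Basis.constr_basis, Module.Basis.constr_basis,
        stdSympBasis_eq_sumElim s, stdSympBasis_eq_sumElim t]
      exact h.apply_sumElim_eq stdSympForm_isAlt stdSympForm_isAlt
        isSymplecticFamily_stdSympBasis s t
  intro x y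
  rw [sympMatrix, LinearMap.toMatrix'_mulVec, LinearMap.toMatrix'_mulVec]
  exact LinearMap.congr_fun₂ hL x y

theorem sympMatrix_mulVec_stdSympBasis (U V : Fin g → Fin (2 * g) → R) (s : Fin g ⊕ Fin g) :
    sympMatrix U V *ᵥ stdSympBasis R g s = Sum.elim U V s := by
  rw [sympMatrix, LinearMap.toMatrix'_mulVec, Module.Basis.constr_basis]

namespace IsStdSymplectic

variable {S T : Matrix (Fin (2 * g)) (Fin (2 * g)) R}

theorem mul (hS : IsStdSymplectic S) (hT : IsStdSymplectic T) : IsStdSymplectic (S * T) :=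
  fun x y => by rw [← Matrix.mulVec_mulVec, ← Matrix.mulVec_mulVec, hS, hT]

theorem nonsing_inv (hS : IsStdSymplectic S) (hdet : IsUnit S.det) : IsStdSymplectic S⁻¹ :=
  fun x y => by
    rw [← hS, Matrix.mulVec_mulVec, Matrix.mulVec_mulVec, Matrix.mul_nonsing_inv _ hdet,
      Matrix.one_mulVec, Matrix.one_mulVec]

theorem isUnit_det {K : Type*} [Field K] {S : Matrix (Fin (2 * g)) (Fin (2 * g)) K}
    (hS : IsStdSymplectic S) : IsUnit S.det := by
  rw [← Matrix.isUnit_iff_isUnit_det, ← Matrix.mulVec_injective_iff_isUnit,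
    ← Matrix.coe_mulVecLin, injective_iff_map_eq_zero']
  refine fun x => ⟨fun hx => stdSympForm_separatingLeft x fun y => ?_, fun hx => by simp [hx]⟩
  rw [stdSympForm_apply, ← hS, ← Matrix.mulVecLin_apply, hx, ← stdSympForm_apply, map_zero,
    LinearMap.zero_apply]

end IsStdSymplectic

open Complex

section Complexify

variable {n : Type*}

def complexify (x y : n → ℝ) : n → ℂ := fun j => x j + y j * I

theorem complexify_re_im (z : n → ℂ) :
    complexify (fun j => (z j).re) (fun j => (z j).im) = z :=
  funext fun j => re_add_im (z j)

theorem star_complexify (x y : n → ℝ) : star (complexify x y) = complexify x (-y) := by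
  funext j
  simp [complexify]

theorem map_ofReal_mulVec_complexify {m : Type*} [Fintype n] (S : Matrix m n ℝ) (x y : n → ℝ) :
    S.map ofReal *ᵥ complexify x y = complexify (S *ᵥ x) (S *ᵥ y) := by
  funext r
  simp [complexify, mulVec, dotProduct, Finset.sum_add_distrib, mul_add, Finset.sum_mul, mul_assoc]

theorem Matrix.mulVecLin_map_ofReal_mul {n : Type*} [Fintype n] [DecidableEq n]
    (A B : Matrix n n ℝ) :
    ((A * B).map ofReal).mulVecLin = (A.map ofReal).mulVecLin ∘ₗ (B.map ofReal).mulVecLin := by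
  rw [← Matrix.mulVecLin_mul]
  exact congrArg Matrix.mulVecLin (Matrix.map_mul (f := ofRealHom))

end Complexify

theorem stdSymp_complexify (x₁ y₁ x₂ y₂ : Fin (2 * g) → ℝ) :
    stdSymp g (complexify x₁ y₁) (complexify x₂ y₂) =
      ↑(stdSymp g x₁ x₂ - stdSymp g y₁ y₂) + ↑(stdSymp g x₁ y₂ + stdSymp g y₁ x₂) * I := by
  simp only [stdSymp_eq, complexify]
  push_cast
  simp only [← Finset.sum_sub_distrib, ← Finset.sum_add_distrib, Finset.sum_mul]
  refine Finset.sum_congr rfl fun i _ => ?_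
  linear_combination
    (↑(y₁ (evenIdx i)) * ↑(y₂ (oddIdx i)) - ↑(y₁ (oddIdx i)) * ↑(y₂ (evenIdx i)) : ℂ) * I_sq

theorem isSymplecticFamily_of_complexify {ι : Type*} [DecidableEq ι] {u v : ι → Fin (2 * g) → ℝ}
    (hiso : ∀ a b, stdSymp g (complexify (u a) (v a)) (complexify (u b) (v b)) = 0)
    (horth : ∀ a b, I * stdSymp g (complexify (u b) (v b)) (star (complexify (u a) (v a))) / 2 =
      if a = b then 1 else 0) :
    (stdSympForm ℝ g).IsSymplecticFamily u v := by
  have hanti (x y : Fin (2 * g) → ℝ) : stdSymp g y x = -stdSymp g x y := by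
    rw [← stdSympForm_apply, ← stdSympForm_isAlt.neg_eq, stdSympForm_apply]
  have hneg (x y : Fin (2 * g) → ℝ) : stdSymp g x (-y) = -stdSymp g x y := by
    simp only [← stdSympForm_apply, map_neg]
  have hiso' a b : stdSymp g (u a) (u b) = stdSymp g (v a) (v b) ∧
      stdSymp g (u a) (v b) = stdSymp g (u b) (v a) := by
    have := hiso a b
    rw [stdSymp_complexify, Complex.ext_iff] at this
    simp only [add_re, add_im, mul_re, mul_im, I_re, I_im, ofReal_re, ofReal_im, zero_re,
      zero_im] at this
    constructor <;> linarith [hanti (u b) (v a)]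
  have horth' a b : stdSymp g (u a) (u b) = -stdSymp g (v a) (v b) ∧
      stdSymp g (u a) (v b) + stdSymp g (u b) (v a) = 2 * if a = b then 1 else 0 := by
    have := horth a b
    rw [star_complexify, stdSymp_complexify, Complex.ext_iff, apply_ite re, apply_ite im] at this
    simp only [hneg, div_ofNat_re, div_ofNat_im, add_re, add_im, mul_re, mul_im, I_re, I_im,
      ofReal_re, ofReal_im, one_re, one_im, zero_re, zero_im] at this
    constructor <;> split_ifs at this ⊢ <;>
      linarith [hanti (u a) (u b), hanti (v a) (v b), hanti (u a) (v b)]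
  refine ⟨fun a b => ?_, fun a b => ?_, fun a b => ?_⟩ <;> rw [stdSympForm_apply] <;>
    linarith [hiso' a b, horth' a b]

/-- A copy of `τ`, on which the Hodge inner product can be installed without clashing with the
sup norm that `τ` inherits from `Fin (2 * g) → ℂ`. -/
def HodgeSpace (τ : Submodule ℂ (Fin (2 * g) → ℂ)) : Type := τ

namespace HodgeSpace

variable {τ : Submodule ℂ (Fin (2 * g) → ℂ)}

noncomputable instance : AddCommGroup (HodgeSpace τ) := inferInstanceAs (AddCommGroup τ)

noncomputable instance : Module ℂ (HodgeSpace τ) := inferInstanceAs (Module ℂ τ)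

instance : FiniteDimensional ℂ (HodgeSpace τ) := inferInstanceAs (FiniteDimensional ℂ τ)

def val : HodgeSpace τ →ₗ[ℂ] Fin (2 * g) → ℂ := τ.subtype

theorem val_mem (x : HodgeSpace τ) : val x ∈ τ := (x : τ).2

theorem val_injective : Function.Injective (val : HodgeSpace τ → _) := Subtype.val_injective

theorem span_range_val_comp {ι : Type*} {b : ι → HodgeSpace τ}
    (hb : Submodule.span ℂ (Set.range b) = ⊤) : Submodule.span ℂ (Set.range (val ∘ b)) = τ := by
  rw [Set.range_comp, Submodule.span_image, hb, Submodule.map_top]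
  exact τ.range_subtype

theorem exists_pos_of_ne_zero (hτ : IsHodgeRiemann g τ) {x : HodgeSpace τ} (hx : x ≠ 0) :
    ∃ r : ℝ, 0 < r ∧ I * stdSymp g (val x) (star (val x)) = r :=
  hτ.2 _ (val_mem x) (val_injective.ne_iff' (map_zero val) |>.2 hx)

/-- The factor `1 / 2` makes a unit vector `u + i • v` satisfy `ω(u, v) = 1`. -/
@[reducible]
noncomputable def hodgeCore (hτ : IsHodgeRiemann g τ) :
    InnerProductSpace.Core ℂ (HodgeSpace τ) where
  inner x y := I * stdSymp g (val y) (star (val x)) / 2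
  conj_inner_symm x y := by
    simp only [map_div₀, map_mul, conj_I, map_ofNat]
    rw [starRingEnd_apply, star_stdSymp, star_star, ← stdSympForm_apply,
      ← stdSympForm_isAlt.neg_eq, stdSympForm_apply]
    ring
  re_inner_nonneg x := by
    rcases eq_or_ne x 0 with rfl | hx
    · simp [← stdSympForm_apply]
    · obtain ⟨r, hr, hxr⟩ := exists_pos_of_ne_zero hτ hx
      rw [hxr, ← ofReal_ofNat, ← ofReal_div]
      exact (div_pos hr two_pos).le
  add_left x y z := by
    simp only [map_add, star_add, ← stdSympForm_apply]
    ring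
  smul_left x y r := by
    simp only [map_smul, star_smul, ← stdSympForm_apply, starRingEnd_apply, smul_eq_mul]
    ring
  definite x hx := by
    by_contra hx0
    obtain ⟨r, hr, hxr⟩ := exists_pos_of_ne_zero hτ hx0
    rw [hxr] at hx
    exact hr.ne' (by exact_mod_cast (div_eq_zero_iff.1 hx).resolve_right two_ne_zero)

end HodgeSpace

theorem IsHodgeRiemann.exists_orthonormal_spanning {τ : Submodule ℂ (Fin (2 * g) → ℂ)}
    (hτ : IsHodgeRiemann g τ) {k : ℕ} (hdim : Module.finrank ℂ τ = k) :
    ∃ x : Fin k → Fin (2 * g) → ℂ, Submodule.span ℂ (Set.range x) = τ ∧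
      ∀ a b, I * stdSymp g (x b) (star (x a)) / 2 = if a = b then 1 else 0 := by
  let _ := HodgeSpace.hodgeCore hτ
  let _ : NormedAddCommGroup (HodgeSpace τ) := InnerProductSpace.Core.toNormedAddCommGroup (𝕜 := ℂ)
  let _ : InnerProductSpace ℂ (HodgeSpace τ) := InnerProductSpace.ofCore _
  let b := (stdOrthonormalBasis ℂ (HodgeSpace τ)).reindex (finCongr hdim)
  exact ⟨HodgeSpace.val ∘ b, HodgeSpace.span_range_val_comp (by simpa using b.toBasis.span_eq),
    orthonormal_iff_ite.1 b.orthonormal⟩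

def stdHodgePlane (g k : ℕ) (hkg : k ≤ g) : Submodule ℂ (Fin (2 * g) → ℂ) :=
  Submodule.span ℂ (Set.range fun a : Fin k =>
    complexify (stdSympBasis ℝ g (.inl (Fin.castLE hkg a)))
      (stdSympBasis ℝ g (.inr (Fin.castLE hkg a))))

theorem IsHodgeRiemann.exists_isStdSymplectic_map_stdHodgePlane
    {τ : Submodule ℂ (Fin (2 * g) → ℂ)} (hτ : IsHodgeRiemann g τ) {k : ℕ} (hkg : k ≤ g)
    (hdim : Module.finrank ℂ τ = k) :
    ∃ S : Matrix (Fin (2 * g)) (Fin (2 * g)) ℝ, IsStdSymplectic S ∧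
      Submodule.map (S.map ofReal).mulVecLin (stdHodgePlane g k hkg) = τ := by
  obtain ⟨x, hspan, horth⟩ := hτ.exists_orthonormal_spanning hdim
  set u : Fin k → Fin (2 * g) → ℝ := fun a j => (x a j).re
  set v : Fin k → Fin (2 * g) → ℝ := fun a j => (x a j).im
  have hx a : complexify (u a) (v a) = x a := complexify_re_im (x a)
  have hmem a : x a ∈ τ := hspan ▸ Submodule.subset_span ⟨a, rfl⟩
  have hfam : (stdSympForm ℝ g).IsSymplecticFamily u v :=
    isSymplecticFamily_of_complexify (fun a b => by rw [hx, hx]; exact hτ.1 _ (hmem a) _ (hmem b))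
      (fun a b => by rw [hx, hx]; exact horth a b)
  obtain ⟨U, V, hUV, hU, hV⟩ :=
    hfam.exists_extend stdSympForm_isAlt stdSympForm_separatingLeft hkg (by simp)
  refine ⟨sympMatrix U V, isStdSymplectic_sympMatrix hUV, ?_⟩
  rw [stdHodgePlane, Submodule.map_span, ← Set.range_comp, ← hspan]
  refine congrArg (fun f => Submodule.span ℂ (Set.range f)) (funext fun a => ?_)
  rw [Function.comp_apply, Matrix.mulVecLin_apply, map_ofReal_mulVec_complexify,
    sympMatrix_mulVec_stdSympBasis, sympMatrix_mulVec_stdSympBasis, ← hx]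
  exact congrArg₂ complexify (congrFun hU a) (congrFun hV a)

end StdSymp

theorem sp_real_transitive_on_hodgeRiemann_planes_general
    (g k : ℕ) (hkg : k ≤ g)
    (τ τ' : Submodule ℂ (Fin (2 * g) → ℂ))
    (hτdim : Module.finrank ℂ τ = k) (hτ'dim : Module.finrank ℂ τ' = k)
    (hτ : IsHodgeRiemann g τ) (hτ' : IsHodgeRiemann g τ') :
    ∃ S : Matrix (Fin (2 * g)) (Fin (2 * g)) ℝ,
      IsUnit S.det ∧
      (∀ x y : Fin (2 * g) → ℝ, stdSymp g (S.mulVec x) (S.mulVec y) = stdSymp g x y) ∧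
      Submodule.map (S.map (Complex.ofReal)).mulVecLin τ = τ' := by
  obtain ⟨S, hS, rfl⟩ := hτ.exists_isStdSymplectic_map_stdHodgePlane hkg hτdim
  obtain ⟨T, hT, rfl⟩ := hτ'.exists_isStdSymplectic_map_stdHodgePlane hkg hτ'dim
  have hST : IsStdSymplectic (T * S⁻¹) := hT.mul (hS.nonsing_inv hS.isUnit_det)
  refine ⟨T * S⁻¹, hST.isUnit_det, hST, ?_⟩
  rw [← Submodule.map_comp, ← Matrix.mulVecLin_map_ofReal_mul, Matrix.mul_assoc,
    Matrix.nonsing_inv_mul _ hS.isUnit_det, Matrix.mul_one]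

/-- **Transitivity of `Sp(2g,ℝ)` on Hodge–Riemann `k`-planes.**
For `1 ≤ k ≤ g` and any two `k`-dimensional Hodge–Riemann subspaces
`τ, τ' ⊆ ℂ^{2g}` there is a real symplectic matrix `S` whose `ℂ`-linear
extension maps `τ` onto `τ'`. -/
theorem sp_real_transitive_on_hodgeRiemann_planes
    (g k : ℕ) (hg : 1 ≤ g) (hk : 1 ≤ k) (hkg : k ≤ g)
    (τ τ' : Submodule ℂ (Fin (2 * g) → ℂ))
    (hτdim : Module.finrank ℂ τ = k) (hτ'dim : Module.finrank ℂ τ' = k)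
    (hτ : IsHodgeRiemann g τ) (hτ' : IsHodgeRiemann g τ') :
    ∃ S : Matrix (Fin (2 * g)) (Fin (2 * g)) ℝ,
      IsUnit S.det ∧
      (∀ x y : Fin (2 * g) → ℝ, stdSymp g (S.mulVec x) (S.mulVec y) = stdSymp g x y) ∧
      Submodule.map (S.map (Complex.ofReal)).mulVecLin τ = τ' :=
  sp_real_transitive_on_hodgeRiemann_planes_general g k hkg τ τ' hτdim hτ'dim hτ hτ'
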